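/- Let G be a finite group and ω a normalized 3-cocycle with values in k^×. Define A_G^ω as the k-vector space with basis {e_{a|b|y|x} : a,b,y,x ∈ G} and multiplication e_{a'|b'|y'|x'}·e_{a|b|y|x} = δ_{y',ayb} δ_{x',axb} · (ω(a',a,x)/ω(a',a,y)) · (ω(a',ax,b)/ω(a',ay,b)) · (ω(a'ay,b,b')/ω(a'ax,b,b')) · e_{a'a|bb'|y|x}, with unit Σ_{y,x} e_{1|1|y|x}. Then this multiplication is associative and unital, so A_G^ω is a k-algebra of dimension |G|⁴. -/

import Mathlib

noncomputable section

variable (k : Type*) [Field k] (G : Type*) [Group G] [Fintype G] (ω : G → G → G → kˣ)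

/-- The underlying vector space of `A_G^ω`, with basis `{e_{a|b|y|x} : a, b, y, x ∈ G}`. -/
abbrev AG (k G : Type*) [Field k] := (G × G × G × G) →₀ k

/-- The product of two basis vectors `e_{a'|b'|y'|x'} · e_{a|b|y|x}`:
`δ_{y',ayb} δ_{x',axb} (ω(a',a,x)/ω(a',a,y)) (ω(a',ax,b)/ω(a',ay,b))
(ω(a'ay,b,b')/ω(a'ax,b,b')) e_{a'a|bb'|y|x}`. -/
def agMulFun (p q : G × G × G × G) : AG k G := by
  classical
  -- p = (a', b', y', x'), q = (a, b, y, x)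
  exact if p.2.2.1 = q.1 * q.2.2.1 * q.2.1 ∧ p.2.2.2 = q.1 * q.2.2.2 * q.2.1
    then ((ω p.1 q.1 q.2.2.2 * (ω p.1 q.1 q.2.2.1)⁻¹
        * (ω p.1 (q.1 * q.2.2.2) q.2.1) * (ω p.1 (q.1 * q.2.2.1) q.2.1)⁻¹
        * (ω (p.1 * q.1 * q.2.2.1) q.2.1 p.2.1)
        * (ω (p.1 * q.1 * q.2.2.2) q.2.1 p.2.1)⁻¹ : kˣ) : k) •
      Finsupp.single (p.1 * q.1, q.2.1 * p.2.1, q.2.2.1, q.2.2.2) 1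
    else 0

/-- The multiplication of `A_G^ω`. -/
def agMul : AG k G →ₗ[k] AG k G →ₗ[k] AG k G :=
  Finsupp.lsum k fun p => LinearMap.toSpanSingleton k _
    (Finsupp.lsum k fun q => LinearMap.toSpanSingleton k _ (agMulFun k G ω p q))

/-- The unit `Σ_{y,x} e_{1|1|y|x}` of `A_G^ω`. -/
def agOne : AG k G := ∑ y : G, ∑ x : G, Finsupp.single ((1 : G), (1 : G), y, x) 1

/-!
Write the structure constant of `e_{a'|b'|y'|x'} · e_{a|b|y|x}` as `φ(x) / φ(y)` with
`φ(z) = ω(a',a,z) ω(a',az,b) / ω(a'az,b,b')`. Four instances of the cocycle identity show that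
the phases of the two bracketings of a triple product agree up to the factor
`ω(a₁,a₂,a₃) / ω(b₃,b₂,b₁)`, which is independent of `z` and so cancels in `φ(x) / φ(y)`.
Normalization of `ω` makes the phases trivial when one factor is a summand of the unit.
-/

section Phase

variable {G M : Type*} [Group G] [CommGroup M]

def IsMulCocycle₃ (ω : G → G → G → M) : Prop :=
  ∀ g₁ g₂ g₃ g₄ : G, ω (g₁ * g₂) g₃ g₄ * ω g₁ g₂ (g₃ * g₄)
    = ω g₁ g₂ g₃ * ω g₁ (g₂ * g₃) g₄ * ω g₂ g₃ g₄

def agPhase (ω : G → G → G → M) (a' b' a b z : G) : M :=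
  ω a' a z * ω a' (a * z) b * (ω (a' * a * z) b b')⁻¹

variable {ω : G → G → G → M}

theorem agPhase_mul_agPhase (hω : IsMulCocycle₃ ω) (a₁ b₁ a₂ b₂ a₃ b₃ z : G) :
    agPhase ω a₁ b₁ a₂ b₂ (a₃ * z * b₃) * agPhase ω (a₁ * a₂) (b₂ * b₁) a₃ b₃ z
      = ω a₁ a₂ a₃ * (ω b₃ b₂ b₁)⁻¹ *
        (agPhase ω a₂ b₂ a₃ b₃ z * agPhase ω a₁ b₁ (a₂ * a₃) (b₃ * b₂) z) := by
  have h₁ := congrArg Additive.ofMul (hω a₁ a₂ a₃ z)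
  have h₂ := congrArg Additive.ofMul (hω a₁ a₂ (a₃ * z) b₃)
  have h₃ := congrArg Additive.ofMul (hω a₁ (a₂ * (a₃ * z)) b₃ b₂)
  have h₄ := congrArg Additive.ofMul (hω (a₁ * (a₂ * (a₃ * z))) b₃ b₂ b₁)
  apply Additive.ofMul.injective
  simp only [agPhase, ofMul_mul, ofMul_inv, mul_assoc] at h₁ h₂ h₃ h₄ ⊢
  linear_combination (norm := abel) h₁ + h₂ - h₃ - h₄

theorem agPhase_div_mul_agPhase_div (hω : IsMulCocycle₃ ω) (a₁ b₁ a₂ b₂ a₃ b₃ y x : G) :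
    agPhase ω a₁ b₁ a₂ b₂ (a₃ * x * b₃) / agPhase ω a₁ b₁ a₂ b₂ (a₃ * y * b₃)
        * (agPhase ω (a₁ * a₂) (b₂ * b₁) a₃ b₃ x / agPhase ω (a₁ * a₂) (b₂ * b₁) a₃ b₃ y)
      = agPhase ω a₂ b₂ a₃ b₃ x / agPhase ω a₂ b₂ a₃ b₃ y
        * (agPhase ω a₁ b₁ (a₂ * a₃) (b₃ * b₂) x / agPhase ω a₁ b₁ (a₂ * a₃) (b₃ * b₂) y) := by
  rw [div_mul_div_comm, div_mul_div_comm, agPhase_mul_agPhase hω, agPhase_mul_agPhase hω,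
    mul_div_mul_left_eq_div]

theorem agPhase_one_one_left (hω₂ : ∀ g h : G, ω 1 g h = 1) (hω₃ : ∀ g h : G, ω g h 1 = 1)
    (a b z : G) : agPhase ω 1 1 a b z = 1 := by
  simp [agPhase, hω₂, hω₃]

theorem agPhase_one_one_right (hω₁ : ∀ g h : G, ω g 1 h = 1) (hω₃ : ∀ g h : G, ω g h 1 = 1)
    (a' b' z : G) : agPhase ω a' b' 1 1 z = 1 := by
  simp [agPhase, hω₁, hω₃]

end Phase

namespace Finsupp

variable {α R : Type*}

theorem apply_eq_self_of_single [Semiring R] {f : (α →₀ R) →ₗ[R] α →₀ R}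
    (h : ∀ a, f (single a 1) = single a 1) (x : α →₀ R) : f x = x :=
  LinearMap.congr_fun
    (Finsupp.basisSingleOne.ext (f₂ := LinearMap.id) fun a => by simpa using h a) x

theorem assoc_of_single [CommSemiring R] (m : (α →₀ R) →ₗ[R] (α →₀ R) →ₗ[R] α →₀ R)
    (h : ∀ p q r, m (m (single p 1) (single q 1)) (single r 1)
      = m (single p 1) (m (single q 1) (single r 1)))
    (x y z : α →₀ R) : m (m x y) z = m x (m y z) := by
  have h₁ : ∀ q r, m.flip (single r 1) ∘ₗ m.flip (single q 1)
      = m.flip (m (single q 1) (single r 1)) :=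
    fun q r => Finsupp.basisSingleOne.ext fun p => by simpa using h p q r
  have h₂ : ∀ x r, m.flip (single r 1) ∘ₗ m x = m x ∘ₗ m.flip (single r 1) :=
    fun x r => Finsupp.basisSingleOne.ext fun q => by simpa using LinearMap.congr_fun (h₁ q r) x
  have h₃ : ∀ x y, m (m x y) = m x ∘ₗ m y :=
    fun x y => Finsupp.basisSingleOne.ext fun r => by simpa using LinearMap.congr_fun (h₂ x r) y
  exact LinearMap.congr_fun (h₃ x y) z

end Finsupp

open Finsupp

section Basis

variable {k G : Type*} [Field k] [Group G] {ω : G → G → G → kˣ}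

theorem agMul_single_single (p q : G × G × G × G) :
    agMul k G ω (single p 1) (single q 1) = agMulFun k G ω p q := by
  simp [agMul]

theorem agMulFun_of_match {a' b' y' x' a b y x : G} (hy : y' = a * y * b) (hx : x' = a * x * b) :
    agMulFun k G ω (a', b', y', x') (a, b, y, x)
      = ((agPhase ω a' b' a b x / agPhase ω a' b' a b y : kˣ) : k)
        • single (a' * a, b * b', y, x) 1 := by
  have hphase : agPhase ω a' b' a b x / agPhase ω a' b' a b y
      = ω a' a x * (ω a' a y)⁻¹ * ω a' (a * x) b * (ω a' (a * y) b)⁻¹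
        * ω (a' * a * y) b b' * (ω (a' * a * x) b b')⁻¹ := by
    simp only [agPhase, div_eq_mul_inv, mul_inv, inv_inv]
    ac_rfl
  simp [agMulFun, hy, hx, hphase]

theorem agMulFun_of_not_match {a' b' y' x' a b y x : G}
    (h : ¬(y' = a * y * b ∧ x' = a * x * b)) :
    agMulFun k G ω (a', b', y', x') (a, b, y, x) = 0 := by
  simp [agMulFun, h]

theorem agMul_assoc_single (hω : IsMulCocycle₃ ω) (p q r : G × G × G × G) :
    agMul k G ω (agMul k G ω (single p 1) (single q 1)) (single r 1)
      = agMul k G ω (single p 1) (agMul k G ω (single q 1) (single r 1)) := by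
  obtain ⟨a₁, b₁, y₁, x₁⟩ := p
  obtain ⟨a₂, b₂, y₂, x₂⟩ := q
  obtain ⟨a₃, b₃, y₃, x₃⟩ := r
  simp only [agMul_single_single]
  by_cases hqr : y₂ = a₃ * y₃ * b₃ ∧ x₂ = a₃ * x₃ * b₃
  · obtain ⟨rfl, rfl⟩ := hqr
    rw [agMulFun_of_match rfl rfl, map_smul, agMul_single_single]
    by_cases hpq : y₁ = a₂ * (a₃ * y₃ * b₃) * b₂ ∧ x₁ = a₂ * (a₃ * x₃ * b₃) * b₂
    · obtain ⟨rfl, rfl⟩ := hpq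
      rw [agMulFun_of_match rfl rfl, map_smul, LinearMap.smul_apply, agMul_single_single,
        agMulFun_of_match rfl rfl, agMulFun_of_match (by group) (by group), smul_smul, smul_smul,
        ← Units.val_mul, ← Units.val_mul, agPhase_div_mul_agPhase_div hω]
      simp only [mul_assoc]
    · have hpqr : ¬(y₁ = a₂ * a₃ * y₃ * (b₃ * b₂) ∧ x₁ = a₂ * a₃ * x₃ * (b₃ * b₂)) := by
        simpa only [mul_assoc] using hpq
      rw [agMulFun_of_not_match hpq, agMulFun_of_not_match hpqr, map_zero, LinearMap.zero_apply,
        smul_zero]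
  · rw [agMulFun_of_not_match hqr, map_zero]
    by_cases hpq : y₁ = a₂ * y₂ * b₂ ∧ x₁ = a₂ * x₂ * b₂
    · rw [agMulFun_of_match hpq.1 hpq.2, map_smul, LinearMap.smul_apply, agMul_single_single,
        agMulFun_of_not_match hqr, smul_zero]
    · rw [agMulFun_of_not_match hpq, map_zero, LinearMap.zero_apply]

variable [Fintype G]

theorem agMul_agOne_single (hω₂ : ∀ g h : G, ω 1 g h = 1) (hω₃ : ∀ g h : G, ω g h 1 = 1)
    (q : G × G × G × G) : agMul k G ω (agOne k G) (single q 1) = single q 1 := by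
  obtain ⟨a, b, y, x⟩ := q
  simp only [agOne, map_sum, LinearMap.sum_apply, agMul_single_single]
  rw [Fintype.sum_eq_single (a * y * b), Fintype.sum_eq_single (a * x * b),
    agMulFun_of_match rfl rfl]
  · simp [agPhase_one_one_left hω₂ hω₃]
  · exact fun x' hx' => agMulFun_of_not_match fun h => hx' h.2
  · exact fun y' hy' => Finset.sum_eq_zero fun x' _ => agMulFun_of_not_match fun h => hy' h.1

theorem agMul_single_agOne (hω₁ : ∀ g h : G, ω g 1 h = 1) (hω₃ : ∀ g h : G, ω g h 1 = 1)
    (p : G × G × G × G) : agMul k G ω (single p 1) (agOne k G) = single p 1 := by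
  obtain ⟨a', b', y', x'⟩ := p
  simp only [agOne, map_sum, agMul_single_single]
  rw [Fintype.sum_eq_single y', Fintype.sum_eq_single x',
    agMulFun_of_match (by group) (by group)]
  · simp [agPhase_one_one_right hω₁ hω₃]
  · exact fun x hx => agMulFun_of_not_match fun h => hx (by simpa using h.2.symm)
  · exact fun y hy => Finset.sum_eq_zero fun x _ =>
      agMulFun_of_not_match fun h => hy (by simpa using h.1.symm)

end Basis

/-- For a finite group `G` and a normalized 3-cocycle `ω` valued in `kˣ`,
the multiplication of `A_G^ω` is associative with unit `Σ_{y,x} e_{1|1|y|x}`, so `A_G^ω`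
is a `k`-algebra of dimension `|G|⁴`. -/
theorem ag_isAssociativeUnitalAlgebra
    (hcocycle : ∀ g₁ g₂ g₃ g₄ : G,
      ω (g₁ * g₂) g₃ g₄ * ω g₁ g₂ (g₃ * g₄)
        = ω g₁ g₂ g₃ * ω g₁ (g₂ * g₃) g₄ * ω g₂ g₃ g₄)
    (hnorm₁ : ∀ g h : G, ω g 1 h = 1)
    (hnorm₂ : ∀ g h : G, ω 1 g h = 1)
    (hnorm₃ : ∀ g h : G, ω g h 1 = 1) :
    (∀ x y z : AG k G, agMul k G ω (agMul k G ω x y) z = agMul k G ω x (agMul k G ω y z)) ∧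
    (∀ x : AG k G, agMul k G ω (agOne k G) x = x) ∧
    (∀ x : AG k G, agMul k G ω x (agOne k G) = x) ∧
    Module.finrank k (AG k G) = Fintype.card G ^ 4 :=
  ⟨assoc_of_single _ (agMul_assoc_single hcocycle),
    apply_eq_self_of_single (agMul_agOne_single hnorm₂ hnorm₃),
    apply_eq_self_of_single (f := (agMul k G ω).flip (agOne k G))
      (agMul_single_agOne hnorm₁ hnorm₃),
    by simp [Fintype.card_prod, pow_succ, mul_assoc]⟩

end
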